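/- Let G = (V,E) be a finite connected simple graph. Then for any two states (A,u,v), (B,x,y) ∈ S(G) there exists a finite sequence of single worm moves transforming (A,u,v) into (B,x,y), where a single worm move from a state (A,u,v) consists of choosing one of the two defects (say u) and an edge uu' ∈ E incident to it, and passing to (A △ uu', u', v) (respectively, choosing v and vv' ∈ E and passing to (A △ vv', u, v')). -/
import Mathlib


open Finset

/-- The degree of a vertex `x` in the spanning subgraph `(V, A)`:
the number of edges of `A` incident to `x`. -/
def degA {V : Type*} [DecidableEq V] (A : Finset (Sym2 V)) (x : V) : ℕ :=
  (A.filter fun e => x ∈ e).card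

/-- `(A, u, v)` belongs to the worm state space `S(G)`: `A` is a set of edges of `G`
whose odd-degree vertices are exactly `{u, v}` when `u ≠ v`, and none when `u = v`. -/
def SGstate {V : Type*} [DecidableEq V] (G : SimpleGraph V) [DecidableRel G.Adj] [Fintype V]
    (A : Finset (Sym2 V)) (u v : V) : Prop :=
  A ⊆ G.edgeFinset ∧ ∀ x, Odd (degA A x) ↔ (u ≠ v ∧ (x = u ∨ x = v))

/-- A single (simple) worm move: choose one of the two defects and an edge of `G`
emanating from it, toggle that edge and move the chosen defect along it. -/
def SimpleWormMove {V : Type*} [DecidableEq V] (G : SimpleGraph V) [DecidableRel G.Adj]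
    (p q : Finset (Sym2 V) × V × V) : Prop :=
  (∃ u', G.Adj p.2.1 u' ∧ q = (symmDiff p.1 {s(p.2.1, u')}, u', p.2.2)) ∨
  (∃ v', G.Adj p.2.2 v' ∧ q = (symmDiff p.1 {s(p.2.2, v')}, p.2.1, v'))

lemma symmDiff_singleton_of_mem {α : Type*} [DecidableEq α] {A : Finset α} {e : α}
    (he : e ∈ A) : symmDiff A {e} = A.erase e := by
  ext x
  simp only [Finset.mem_symmDiff, Finset.mem_singleton, Finset.mem_erase]
  constructor
  · rintro (⟨hx, hne⟩ | ⟨rfl, hx⟩)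
    · exact ⟨hne, hx⟩
    · exact absurd he hx
  · rintro ⟨hne, hx⟩
    exact Or.inl ⟨hx, hne⟩

lemma odd_degA_erase {V : Type*} [DecidableEq V] {A : Finset (Sym2 V)} {e : Sym2 V}
    (he : e ∈ A) (x : V) :
    Odd (degA (A.erase e) x) ↔ (Odd (degA A x) ↔ x ∉ e) := by
  unfold degA
  rw [Finset.filter_erase]
  by_cases hx : x ∈ e
  · have hmem : e ∈ A.filter (fun e => x ∈ e) := Finset.mem_filter.2 ⟨he, hx⟩
    have h1 : (A.filter (fun e => x ∈ e)).card =
        ((A.filter (fun e => x ∈ e)).erase e).card + 1 := by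
      rw [Finset.card_erase_of_mem hmem]
      have := Finset.card_pos.2 ⟨e, hmem⟩
      omega
    simp only [hx, not_true_eq_false, iff_false, Nat.odd_iff] at *
    omega
  · have : e ∉ A.filter (fun e => x ∈ e) := by simp [hx]
    rw [Finset.erase_eq_of_notMem this]
    simp [hx]

lemma simpleWormMove_symm {V : Type*} [DecidableEq V] (G : SimpleGraph V)
    [DecidableRel G.Adj] : Symmetric (SimpleWormMove G) := by
  rintro ⟨A, u, v⟩ q (⟨u', hadj, rfl⟩ | ⟨v', hadj, rfl⟩)
  · left
    exact ⟨u, hadj.symm, by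
      simp only
      rw [show s(u', u) = s(u, u') from Sym2.eq_swap, symmDiff_symmDiff_cancel_right]⟩
  · right
    exact ⟨v, hadj.symm, by
      simp only
      rw [show s(v', v) = s(v, v') from Sym2.eq_swap, symmDiff_symmDiff_cancel_right]⟩

/-- Move the coincident pair of defects in lockstep along a walk; the edge set is unchanged. -/
lemma lockstep {V : Type*} [DecidableEq V] {G : SimpleGraph V} [DecidableRel G.Adj]
    (A : Finset (Sym2 V)) {u a : V} (w : G.Walk u a) :
    Relation.ReflTransGen (SimpleWormMove G) (A, u, u) (A, a, a) := by
  induction w with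
  | nil => exact Relation.ReflTransGen.refl
  | @cons u b a hadj rest ih =>
      have s1 : SimpleWormMove G (A, u, u) (symmDiff A {s(u, b)}, b, u) :=
        Or.inl ⟨b, hadj, rfl⟩
      have s2 : SimpleWormMove G (symmDiff A {s(u, b)}, b, u) (A, b, b) :=
        Or.inr ⟨b, hadj, by simp [symmDiff_symmDiff_cancel_right]⟩
      exact ((Relation.ReflTransGen.single s1).tail s2).trans ih

lemma reach_canonical {V : Type*} [Fintype V] [DecidableEq V]
    (G : SimpleGraph V) [DecidableRel G.Adj] (hconn : G.Connected) :
    ∀ (n : ℕ) (A : Finset (Sym2 V)) (u v : V), A.card = n → SGstate G A u v →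
      ∀ z, Relation.ReflTransGen (SimpleWormMove G) (A, u, v) (∅, z, z) := by
  intro n
  induction n using Nat.strong_induction_on with
  | _ n ih =>
  intro A u v hcard hS z
  by_cases huv : u = v
  · subst huv
    rcases A.eq_empty_or_nonempty with rfl | ⟨e, he⟩
    · exact (hconn.preconnected u z).elim fun w => lockstep ∅ w
    · -- all degrees even; pick an edge s(a,b) ∈ A, walk both defects to a, erase the edge
      obtain ⟨a, b, rfl⟩ : ∃ a b, e = s(a, b) := Sym2.ind (fun a b => ⟨a, b, rfl⟩) e
      have hGe : s(a, b) ∈ G.edgeSet := SimpleGraph.mem_edgeFinset.1 (hS.1 he)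
      have hadj : G.Adj a b := hGe
      have hab : a ≠ b := hadj.ne
      have step : SimpleWormMove G (A, a, a) (A.erase s(a, b), b, a) :=
        Or.inl ⟨b, hadj, by rw [symmDiff_singleton_of_mem he]⟩
      have heven : ∀ x, ¬ Odd (degA A x) := by
        intro x hx
        exact ((hS.2 x).1 hx).1 rfl
      have hS' : SGstate G (A.erase s(a, b)) b a := by
        refine ⟨(Finset.erase_subset _ _).trans hS.1, fun x => ?_⟩
        rw [odd_degA_erase he x]
        simp only [Sym2.mem_iff]
        constructor
        · intro h
          rcases Decidable.em (x = a ∨ x = b) with hx | hx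
          · exact ⟨hab.symm, hx.symm⟩
          · exact absurd (h.2 (by tauto)) (heven x)
        · rintro ⟨-, hx⟩
          constructor
          · intro hodd; exact absurd hodd (heven x)
          · intro hnot; exact absurd (by tauto : x = a ∨ x = b) hnot
      have h0 : 0 < n := hcard ▸ Finset.card_pos.2 ⟨_, he⟩
      have hlt : (A.erase s(a, b)).card < n := by
        rw [Finset.card_erase_of_mem he, hcard]; omega
      have tail := ih _ hlt (A.erase s(a, b)) b a rfl hS' z
      have walk := (hconn.preconnected u a).elim fun w => lockstep A w
      exact (walk.trans (Relation.ReflTransGen.single step)).trans tail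
  · -- u ≠ v : the defect u sits on an edge of A; move it along that edge, erasing it
    have hodd : Odd (degA A u) := (hS.2 u).2 ⟨huv, Or.inl rfl⟩
    have hpos : 0 < degA A u := hodd.pos
    obtain ⟨e, hef⟩ := Finset.card_pos.1 hpos
    obtain ⟨heA, hue⟩ := Finset.mem_filter.1 hef
    have hspec : s(u, Sym2.Mem.other' hue) = e := Sym2.other_spec' hue
    set u' := Sym2.Mem.other' hue with hu'
    have hGe : e ∈ G.edgeSet := SimpleGraph.mem_edgeFinset.1 (hS.1 heA)
    have hadj : G.Adj u u' := by rw [← hspec] at hGe; exact hGe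
    have huu' : u ≠ u' := hadj.ne
    have step : SimpleWormMove G (A, u, v) (A.erase e, u', v) :=
      Or.inl ⟨u', hadj, by rw [hspec, symmDiff_singleton_of_mem heA]⟩
    have hS' : SGstate G (A.erase e) u' v := by
      refine ⟨(Finset.erase_subset _ _).trans hS.1, fun x => ?_⟩
      rw [odd_degA_erase heA x, ← hspec, Sym2.mem_iff, hS.2 x]
      by_cases h1 : x = u <;> by_cases h2 : x = u' <;> by_cases h3 : x = v <;>
        simp_all <;> tauto
    have h0 : 0 < n := hcard ▸ Finset.card_pos.2 ⟨_, heA⟩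
    have hlt : (A.erase e).card < n := by
      rw [Finset.card_erase_of_mem heA, hcard]; omega
    exact (Relation.ReflTransGen.single step).trans (ih _ hlt (A.erase e) u' v rfl hS' z)

lemma rtg_symm {α : Type*} {r : α → α → Prop} (h : Symmetric r) {a b : α}
    (hab : Relation.ReflTransGen r a b) : Relation.ReflTransGen r b a := by
  induction hab with
  | refl => exact Relation.ReflTransGen.refl
  | tail _ hr ih => exact (Relation.ReflTransGen.single (h hr)).trans ih

/-- On a finite connected graph, the simple worm moves connect any two states of `S(G)`. -/
theorem simple_worm_moves_irreducible
    {V : Type*} [Fintype V] [DecidableEq V]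
    (G : SimpleGraph V) [DecidableRel G.Adj]
    (hconn : G.Connected)
    (A B : Finset (Sym2 V)) (u v x y : V)
    (hA : SGstate G A u v) (hB : SGstate G B x y) :
    Relation.ReflTransGen (SimpleWormMove G) (A, u, v) (B, x, y) := by
  have h1 := reach_canonical G hconn A.card A u v rfl hA u
  have h2 := reach_canonical G hconn B.card B x y rfl hB u
  exact h1.trans (rtg_symm (simpleWormMove_symm G) h2)
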